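/- Let F be a field with |F| > 2 and let A be an infinite-dimensional affine subspace of the space of finitely supported functions ℕ → F. Then the range of the oscillation function restricted to A contains arbitrarily long intervals of consecutive integers; in particular, for every n there exist elements of A whose oscillation values cover an interval of length n. -/

import Mathlib

/-!
If the support of `g` lies strictly to the right of that of `f`, the sorted support of `f + t • g`
is that of `f` followed by that of `g`, so
`osc (f + t • g) = osc f + osc g + [f (max supp f) ≠ t * g (min supp g)]`.
Since `|F| > 2`, a nonzero `t` can be chosen to make the junction term `0` or `1` at will.
An infinite-dimensional `W` contains nonzero vectors supported arbitrarily far to the right, so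
from `v + w₀, …, v + wₙ` with oscillations `m, …, m + n`, appending one such vector `g` with the
appropriate scalars yields oscillations `m + osc g, …, m + osc g + n + 1`.
-/

/-- The oscillation of a finitely supported function `f : ℕ →₀ F`. -/
def osc {F : Type*} [Field F] [DecidableEq F] (f : ℕ →₀ F) : ℕ :=
  let l := f.support.sort (· ≤ ·)
  ((l.zip l.tail).filter (fun p => decide (f p.1 ≠ f p.2))).length

theorem List.consecutivePairs_concat_append_cons {α : Type*} (l₁ : List α) (x y : α)
    (l₂ : List α) :
    (l₁ ++ [x] ++ y :: l₂).consecutivePairs =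
      (l₁ ++ [x]).consecutivePairs ++ (x, y) :: (y :: l₂).consecutivePairs := by
  induction l₁ with
  | nil => rfl
  | cons a l₁ ih =>
    cases l₁ with
    | nil => rfl
    | cons b l₁ => simpa [List.consecutivePairs] using ih

namespace Finset

variable {α : Type*} [LinearOrder α]

theorem disjoint_of_forall_lt {s t : Finset α} (h : ∀ i ∈ s, ∀ j ∈ t, i < j) : Disjoint s t :=
  disjoint_left.2 fun i hs ht => (h i hs i ht).false

theorem sort_union_of_forall_lt {s t : Finset α} (h : ∀ i ∈ s, ∀ j ∈ t, i < j) :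
    (s ∪ t).sort = s.sort ++ t.sort := by
  refine (sortedLT_sort _).pairwise.eq_of_mem_iff ?_ fun a => by simp
  exact List.pairwise_append.2 ⟨(sortedLT_sort _).pairwise, (sortedLT_sort _).pairwise,
    fun i hi j hj => h i (by simpa using hi) j (by simpa using hj)⟩

theorem exists_sort_eq_concat_max' {s : Finset α} (hs : s.Nonempty) :
    ∃ l, s.sort = l ++ [s.max' hs] := by
  have hne : s.sort ≠ [] := by simpa [← List.length_pos_iff] using hs
  refine ⟨s.sort.dropLast, ?_⟩
  rw [max'_eq_sorted_last, ← List.getLast_eq_getElem hne, List.dropLast_append_getLast]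

theorem exists_sort_eq_cons_min' {s : Finset α} (hs : s.Nonempty) :
    ∃ l, s.sort = s.min' hs :: l := by
  have hne : s.sort ≠ [] := by simpa [← List.length_pos_iff] using hs
  refine ⟨s.sort.tail, ?_⟩
  rw [min'_eq_sorted_zero, ← List.head_eq_getElem hne, List.cons_head_tail]

end Finset

theorem exists_ne_and_ne {α : Type*} [DecidableEq α] (h : ∃ a b c : α, a ≠ b ∧ a ≠ c ∧ b ≠ c)
    (u u' : α) : ∃ t, t ≠ u ∧ t ≠ u' := by
  obtain ⟨a, b, c, hab, hac, hbc⟩ := h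
  have h3 : ({a, b, c} : Finset α).card = 3 := Finset.card_eq_three.2 ⟨a, b, c, hab, hac, hbc, rfl⟩
  obtain ⟨t, -, ht⟩ := Finset.exists_mem_notMem_of_card_lt_card (s := {u, u'}) (t := {a, b, c})
    (by have := Finset.card_le_two (a := u) (b := u'); omega)
  exact ⟨t, by simpa [not_or] using ht⟩

section ListOsc

variable {α β : Type*} [DecidableEq β]

def listOsc (f : α → β) (l : List α) : ℕ :=
  (l.consecutivePairs.filter fun p => f p.1 ≠ f p.2).length

theorem listOsc_concat_append_cons (f : α → β) (l₁ : List α) (x y : α) (l₂ : List α) :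
    listOsc f (l₁ ++ [x] ++ y :: l₂) =
      listOsc f (l₁ ++ [x]) + listOsc f (y :: l₂) + if f x = f y then 0 else 1 := by
  unfold listOsc
  rw [List.consecutivePairs_concat_append_cons, List.filter_append, List.filter_cons,
    List.length_append]
  by_cases h : f x = f y <;> simp [h, add_assoc]

theorem listOsc_congr {f g : α → β} {l : List α} (h : ∀ a ∈ l, f a = g a) :
    listOsc f l = listOsc g l := by
  unfold listOsc
  congr 1
  refine List.filter_congr fun p hp => ?_
  obtain ⟨h₁, h₂⟩ := List.of_mem_zip hp
  rw [h _ h₁, h _ (List.mem_of_mem_tail h₂)]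

end ListOsc

section Osc

variable {F : Type*} [Field F] [DecidableEq F]

theorem Finsupp.support_add_smul_eq {α : Type*} [DecidableEq α] {f g : α →₀ F}
    (h : Disjoint f.support g.support) {t : F} (ht : t ≠ 0) :
    (f + t • g).support = f.support ∪ g.support := by
  have hsupp : (t • g).support = g.support := support_smul_eq ht
  rw [support_add_eq (hsupp ▸ h), hsupp]

theorem osc_eq_listOsc (f : ℕ →₀ F) : osc f = listOsc f f.support.sort := rfl

theorem osc_smul {t : F} (ht : t ≠ 0) (f : ℕ →₀ F) : osc (t • f) = osc f := by
  rw [osc_eq_listOsc, osc_eq_listOsc, Finsupp.support_smul_eq ht]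
  unfold listOsc
  congr 1
  refine List.filter_congr fun p _ => ?_
  simp [ht]

theorem osc_add_of_forall_lt {f g : ℕ →₀ F} (hf : f.support.Nonempty) (hg : g.support.Nonempty)
    (h : ∀ i ∈ f.support, ∀ j ∈ g.support, i < j) :
    osc (f + g) = osc f + osc g +
      if f (f.support.max' hf) = g (g.support.min' hg) then 0 else 1 := by
  have hfg := Finset.disjoint_of_forall_lt h
  have hg0 : ∀ i ∈ f.support, g i = 0 := fun i hi =>
    Finsupp.notMem_support_iff.1 (Finset.disjoint_left.1 hfg hi)
  have hf0 : ∀ j ∈ g.support, f j = 0 := fun j hj =>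
    Finsupp.notMem_support_iff.1 (Finset.disjoint_right.1 hfg hj)
  obtain ⟨l₁, hl₁⟩ := Finset.exists_sort_eq_concat_max' hf
  obtain ⟨l₂, hl₂⟩ := Finset.exists_sort_eq_cons_min' hg
  rw [osc_eq_listOsc, Finsupp.support_add_eq hfg, Finset.sort_union_of_forall_lt h, hl₁, hl₂,
    listOsc_concat_append_cons, osc_eq_listOsc f, osc_eq_listOsc g, hl₁, hl₂,
    listOsc_congr (f := ⇑(f + g)) (g := f), listOsc_congr (f := ⇑(f + g)) (g := g)]
  · simp [hg0 _ (f.support.max'_mem hf), hf0 _ (g.support.min'_mem hg)]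
  · intro j hj
    simp [hf0 j (by simpa [← Finset.mem_sort (· ≤ ·), hl₂] using hj)]
  · intro i hi
    simp [hg0 i (by simpa [← Finset.mem_sort (· ≤ ·), hl₁] using hi)]

theorem exists_osc_add_smul_eq (hF : ∃ a b c : F, a ≠ b ∧ a ≠ c ∧ b ≠ c)
    {f g : ℕ →₀ F} (hf : f.support.Nonempty) (hg : g.support.Nonempty)
    (h : ∀ i ∈ f.support, ∀ j ∈ g.support, i < j) {ε : ℕ} (hε : ε ≤ 1) :
    ∃ t : F, t ≠ 0 ∧ osc (f + t • g) = osc f + osc g + ε := by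
  set x := f (f.support.max' hf)
  set y := g (g.support.min' hg)
  have hx : x ≠ 0 := Finsupp.mem_support_iff.1 (f.support.max'_mem hf)
  have hy : y ≠ 0 := Finsupp.mem_support_iff.1 (g.support.min'_mem hg)
  have hosc : ∀ t ≠ 0, osc (f + t • g) = osc f + osc g + if x = t * y then 0 else 1 := by
    intro t ht
    have hsupp : (t • g).support = g.support := Finsupp.support_smul_eq ht
    rw [osc_add_of_forall_lt hf (hsupp ▸ hg) (hsupp ▸ h), osc_smul ht]
    simp [x, y, hsupp]
  interval_cases ε
  · refine ⟨x / y, div_ne_zero hx hy, ?_⟩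
    rw [hosc _ (div_ne_zero hx hy), div_mul_cancel₀ x hy, if_pos rfl]
  · obtain ⟨t, ht, hxt⟩ := exists_ne_and_ne hF 0 (x / y)
    refine ⟨t, ht, ?_⟩
    rw [hosc t ht, if_neg fun h => hxt (by rw [h, mul_div_cancel_right₀ t hy])]

theorem Submodule.exists_ne_zero_forall_support_ge {W : Submodule F (ℕ →₀ F)}
    (hW : ¬ Module.Finite F W) (N : ℕ) : ∃ w ∈ W, w ≠ 0 ∧ ∀ i ∈ w.support, N ≤ i := by
  by_contra! hlow
  let restrict : W →ₗ[F] (Fin N → F) :=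
    LinearMap.pi fun i => (Finsupp.lapply i.val).comp W.subtype
  refine hW (Module.Finite.of_injective restrict
    ((LinearMap.ker_eq_bot (M := W)).1 (LinearMap.ker_eq_bot'.2 fun w hw => ?_)))
  by_contra hw0
  obtain ⟨i, hi, hiN⟩ := hlow w w.2 (by simpa using hw0)
  exact Finsupp.mem_support_iff.1 hi (congrFun hw ⟨i, hiN⟩)

theorem exists_osc_add_mem_eq_add (hF : ∃ a b c : F, a ≠ b ∧ a ≠ c ∧ b ≠ c)
    (v : ℕ →₀ F) {W : Submodule F (ℕ →₀ F)} (hW : ¬ Module.Finite F W) (n : ℕ) :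
    ∃ m N : ℕ, ∀ j ≤ n, ∃ w ∈ W, (v + w).support.Nonempty ∧
      (v + w).support ⊆ Finset.range N ∧ osc (v + w) = m + j := by
  induction n with
  | zero =>
    obtain ⟨N, hN⟩ := v.support.exists_nat_subset_range
    obtain ⟨g, hgW, hg, hgN⟩ := Submodule.exists_ne_zero_forall_support_ge hW N
    obtain ⟨N', hN'⟩ := (v + g).support.exists_nat_subset_range
    have hvg : Disjoint v.support g.support := Finset.disjoint_of_forall_lt fun i hi j hj =>
      (Finset.mem_range.1 (hN hi)).trans_le (hgN j hj)
    refine ⟨osc (v + g), N', fun j hj => ⟨g, hgW, ?_, hN', by omega⟩⟩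
    rw [Finsupp.support_add_eq hvg]
    exact (Finsupp.support_nonempty_iff.2 hg).mono Finset.subset_union_right
  | succ n ih =>
    obtain ⟨m, N, hm⟩ := ih
    obtain ⟨g, hgW, hg, hgN⟩ := Submodule.exists_ne_zero_forall_support_ge hW N
    obtain ⟨N', hN'⟩ := g.support.exists_nat_subset_range
    have extend : ∀ j ≤ n, ∀ ε ≤ 1, ∃ w ∈ W, (v + w).support.Nonempty ∧
        (v + w).support ⊆ Finset.range (max N N') ∧ osc (v + w) = m + osc g + (j + ε) := by
      intro j hj ε hε
      obtain ⟨w, hwW, hne, hwN, hosc⟩ := hm j hj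
      have hlt : ∀ i ∈ (v + w).support, ∀ k ∈ g.support, i < k := fun i hi k hk =>
        (Finset.mem_range.1 (hwN hi)).trans_le (hgN k hk)
      obtain ⟨t, ht, hosc'⟩ := exists_osc_add_smul_eq hF hne
        (Finsupp.support_nonempty_iff.2 hg) hlt hε
      have hsupp : (v + (w + t • g)).support = (v + w).support ∪ g.support := by
        rw [← add_assoc, Finsupp.support_add_smul_eq (Finset.disjoint_of_forall_lt hlt) ht]
      refine ⟨w + t • g, W.add_mem hwW (W.smul_mem t hgW), ?_, ?_, ?_⟩
      · exact hsupp ▸ hne.mono Finset.subset_union_left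
      · rw [hsupp, Finset.union_subset_iff]
        exact ⟨hwN.trans (Finset.range_subset_range.2 (le_max_left N N')),
          hN'.trans (Finset.range_subset_range.2 (le_max_right N N'))⟩
      · rw [← add_assoc, hosc', hosc]
        ring
    refine ⟨m + osc g, max N N', fun j hj => ?_⟩
    rcases hj.lt_or_eq with hj | rfl
    · exact extend j (by omega) 0 zero_le_one
    · exact extend n le_rfl 1 le_rfl

end Osc

theorem stmt6 {F : Type*} [Field F] [DecidableEq F]
    (hF : ∃ a b c : F, a ≠ b ∧ a ≠ c ∧ b ≠ c)
    (v : ℕ →₀ F) (W : Submodule F (ℕ →₀ F)) (hW : ¬ Module.Finite F W) :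
    ∀ n : ℕ, ∃ m : ℕ, ∀ j ≤ n, ∃ w ∈ W, osc (v + w) = m + j := by
  intro n
  obtain ⟨m, _, hm⟩ := exists_osc_add_mem_eq_add hF v hW n
  exact ⟨m, fun j hj => (hm j hj).imp fun _ ⟨hw, _, _, hosc⟩ => ⟨hw, hosc⟩⟩
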